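/- Suppose $\rho_{ij}=\rho\geq 1$ for all $(i,j)\in\mathcal{A}$, and let $l_{\min}$ be the girth of the directed graph $(\mathcal{T},\mathcal{A})$ (the minimal length of a simple cycle). Then $\chi(\rho) := \min\{\mathcal{I}(\nu)-\mathcal{S}(\nu) : \nu\in\mathcal{M}_1^{s}(\mathcal{T}^2)\} = \rho\log l_{\min} - \rho\log\rho$, where $\mathcal{S}(\nu)=\rho\sum_{(i,j)\in\mathcal{A}}\nu(i,j)\log\nu(i,j)+\rho\log\rho$ and $\mathcal{I}(\nu)=\sum_{(i,j)\in\mathcal{A}}\nu(i,j)\log\frac{\nu(i,j)}{\overline{\nu}(i)}$ (with $\mathcal{I}(\nu)=\infty$ if $\nu$ charges an edge not in $\mathcal{A}$); moreover the minimizers are exactly the measures $\mu_\gamma$ for simple cycles $\gamma$ of length $l_{\min}$. -/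

import Mathlib

/-!
Write `ν̄` for the common marginal of `ν`. For `ν` supported on `A`,
`𝓘(ν) - 𝓢(ν) = (1 - ρ) ∑ ν log ν - ∑ ν̄ log ν̄ - ρ log ρ`, and since `ν ≤ ν̄` and `ρ ≥ 1` this is
at least `-ρ ∑ ν̄ log ν̄ - ρ log ρ`. The girth enters through `ν̄(x) ≤ 1/(l₀+1)`: let `φ` be the
graph distance to `x` truncated at `l₀`. An edge leaving `x` ends at level `l₀` (a shorter way
back would close a cycle shorter than the girth), and any other edge lowers `φ` by at most one,
so the telescoping identity `∑ ν(e) (1 + φ(head e) - φ(tail e)) = 1` gives `(l₀+1) ν̄(x) ≤ 1`.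
Hence `∑ ν̄ log ν̄ ≤ -log (l₀+1)`, and the bound is attained by the measures `μ_γ`.

At equality `ν̄` only takes the values `0` and `1/(l₀+1)`, so its support has `l₀+1` vertices,
and for a vertex `x` of the support every charged edge not leaving `x` lowers `φ` by exactly one.
Following charged edges from `x` then runs through the levels `l₀, …, 1, 0` and closes a cycle
through the whole support; as distinct vertices of the support have distinct levels, each vertex
has a single charged out-edge, so `ν = μ_γ`.
-/

/-- Probability measure on `T²` with equal marginals. -/
def memM1s {T : Type*} [Fintype T] (μ : T × T → ℝ) : Prop :=
  (∀ p, 0 ≤ μ p) ∧ (∑ p : T × T, μ p = 1) ∧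
    ∀ i : T, ∑ j, μ (i, j) = ∑ j, μ (j, i)

/-- The uniform measure on the edges of a cycle `γ` of length `l + 1`,
given by the vertices `γ 0, γ 1, …, γ l` (addition in `Fin (l+1)` is cyclic). -/
noncomputable def cycleMeasure {T : Type*} [Fintype T] [DecidableEq T] {l : ℕ}
    (γ : Fin (l + 1) → T) : T × T → ℝ :=
  fun p => if ∃ m, p = (γ m, γ (m + 1)) then ((l : ℝ) + 1)⁻¹ else 0

open Finset

section

variable {α : Type*}

def IsWalk (r : α → α → Prop) (w : ℕ → α) (k : ℕ) : Prop :=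
  ∀ m < k, r (w m) (w (m + 1))

theorem le_of_isWalk_of_closed {r : α → α → Prop} {l₀ : ℕ}
    (hgirth : ∀ (n : ℕ) (γ : Fin (n + 1) → α), Function.Injective γ →
      (∀ m, r (γ m) (γ (m + 1))) → l₀ ≤ n)
    {n : ℕ} {w : ℕ → α} (hw : IsWalk r w (n + 1)) (hclosed : w (n + 1) = w 0) : l₀ ≤ n := by
  induction n using Nat.strong_induction_on generalizing w with
  | _ n ih =>
  by_cases hinj : Function.Injective fun m : Fin (n + 1) => w m
  · refine hgirth n _ hinj fun m => ?_
    have hsucc : w ((m + 1 : Fin (n + 1)) : ℕ) = w (m + 1) := by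
      rw [Fin.val_add_one]
      split_ifs with h
      · rw [h, Fin.val_last, hclosed]
      · rfl
    simpa only [hsucc] using hw m m.isLt
  · -- a repeated vertex `w s = w t` cuts out the shorter closed walk `w s, …, w t`
    have cut : ∀ s t : ℕ, s < t → t ≤ n → w s = w t → l₀ ≤ n := by
      intro s t hst htn hwst
      have hw' : IsWalk r (fun m => w (s + m)) (t - s - 1 + 1) := fun m hm => by
        simpa only [add_assoc] using hw (s + m) (by omega)
      have := ih (t - s - 1) (by omega) hw' (by rw [add_zero, hwst]; congr 1; omega)
      omega
    obtain ⟨s, t, hst, hne⟩ := Function.not_injective_iff.mp hinj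
    rcases lt_or_gt_of_ne (Fin.val_ne_of_ne hne) with h | h
    · exact cut s t h (by omega) hst
    · exact cut t s h (by omega) hst.symm

noncomputable def truncDist (r : α → α → Prop) (c : ℕ) (v i : α) : ℕ :=
  sInf {k | k = c ∨ ∃ w : ℕ → α, IsWalk r w k ∧ w 0 = v ∧ w k = i}

section truncDist

variable {r : α → α → Prop} {c : ℕ}

theorem truncDist_le (v i : α) : truncDist r c v i ≤ c :=
  Nat.sInf_le (Or.inl rfl)

theorem truncDist_self (i : α) : truncDist r c i i = 0 :=
  Nat.eq_zero_of_le_zero <| Nat.sInf_le <|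
    Or.inr ⟨fun _ => i, fun _ h => absurd h (Nat.not_lt_zero _), rfl, rfl⟩

theorem truncDist_eq_or_exists_isWalk (v i : α) :
    truncDist r c v i = c ∨
      ∃ w : ℕ → α, IsWalk r w (truncDist r c v i) ∧ w 0 = v ∧ w (truncDist r c v i) = i :=
  Nat.sInf_mem (s := {k | k = c ∨ ∃ w : ℕ → α, IsWalk r w k ∧ w 0 = v ∧ w k = i})
    ⟨c, Or.inl rfl⟩

theorem truncDist_le_succ {a b : α} (hab : r a b) (i : α) :
    truncDist r c a i ≤ truncDist r c b i + 1 := by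
  rcases truncDist_eq_or_exists_isWalk (r := r) (c := c) b i with h | ⟨w, hw, hw0, hwi⟩
  · have := truncDist_le (r := r) (c := c) a i
    omega
  · refine Nat.sInf_le (Or.inr ⟨fun m => if m = 0 then a else w (m - 1), fun m hm => ?_, rfl, ?_⟩)
    · rcases m with _ | m
      · simpa [hw0] using hab
      · simpa using hw m (by omega)
    · simpa using hwi

theorem truncDist_eq_of_girth {l₀ : ℕ}
    (hgirth : ∀ (n : ℕ) (γ : Fin (n + 1) → α), Function.Injective γ →
      (∀ m, r (γ m) (γ (m + 1))) → l₀ ≤ n)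
    {i b : α} (hib : r i b) : truncDist r l₀ b i = l₀ := by
  refine le_antisymm (truncDist_le b i) ?_
  rcases truncDist_eq_or_exists_isWalk (r := r) (c := l₀) b i with h | ⟨w, hw, hw0, hwi⟩
  · exact h.ge
  · set k := truncDist r l₀ b i
    refine le_of_isWalk_of_closed hgirth (w := fun m => if m ≤ k then w m else b)
      (fun m hm => ?_) (by simp [hw0])
    rcases Nat.lt_or_ge m k with h | h
    · simpa [h.le, Nat.succ_le_of_lt h] using hw m h
    · obtain rfl : m = k := by omega
      simpa [hwi] using hib

end truncDist

section Marginals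

variable [Fintype α] {ν : α × α → ℝ}

def rowSum (ν : α × α → ℝ) (i : α) : ℝ := ∑ j, ν (i, j)

theorem rowSum_nonneg (hν0 : ∀ p, 0 ≤ ν p) (i : α) : 0 ≤ rowSum ν i :=
  sum_nonneg fun j _ => hν0 (i, j)

theorem le_rowSum (hν0 : ∀ p, 0 ≤ ν p) (p : α × α) : ν p ≤ rowSum ν p.1 :=
  single_le_sum (f := fun j => ν (p.1, j)) (fun j _ => hν0 (p.1, j)) (mem_univ p.2)

theorem sum_rowSum (hν : memM1s ν) : ∑ i, rowSum ν i = 1 := by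
  rw [← hν.2.1, Fintype.sum_prod_type]
  rfl

theorem sum_mul_sub_eq_zero (hν : memM1s ν) (φ : α → ℝ) :
    ∑ p, ν p * (φ p.2 - φ p.1) = 0 := by
  simp only [mul_sub, sum_sub_distrib, sub_eq_zero]
  rw [Fintype.sum_prod_type_right, Fintype.sum_prod_type]
  simp only [← sum_mul]
  exact sum_congr rfl fun b _ => by rw [← hν.2.2 b]

theorem sum_mul_slack_eq [DecidableEq α] (hν : memM1s ν) (φ : α → ℝ) (c : ℝ) (x : α) :
    ∑ p, ν p * (1 + φ p.2 - φ p.1 - if p.1 = x then c else 0) = 1 - c * rowSum ν x := by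
  have h : ∀ p : α × α, ν p * (1 + φ p.2 - φ p.1 - if p.1 = x then c else 0) =
      ν p + ν p * (φ p.2 - φ p.1) - if p.1 = x then c * ν p else 0 := fun p => by
    split_ifs <;> ring
  rw [sum_congr rfl fun p _ => h p, sum_sub_distrib, sum_add_distrib, hν.2.1,
    sum_mul_sub_eq_zero hν, Fintype.sum_prod_type]
  rw [sum_eq_single x (fun b _ hb => by simp [hb]) (by simp)]
  simp [rowSum, mul_sum]

end Marginals

section Girth

variable [DecidableEq α] {ν : α × α → ℝ} {A : Finset (α × α)} {l₀ : ℕ}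

local notation "distA" => truncDist (fun a b => (a, b) ∈ A) l₀

theorem mul_slack_nonneg
    (hgirth : ∀ (n : ℕ) (γ : Fin (n + 1) → α), Function.Injective γ →
      (∀ m, (γ m, γ (m + 1)) ∈ A) → l₀ ≤ n)
    (hν0 : ∀ p, 0 ≤ ν p) (hA : ∀ p ∉ A, ν p = 0) (x : α) (p : α × α) :
    0 ≤ ν p * (1 + (distA p.2 x : ℝ) - distA p.1 x - if p.1 = x then (l₀ : ℝ) + 1 else 0) := by
  by_cases hp : p ∈ A
  · refine mul_nonneg (hν0 p) ?_
    obtain ⟨a, b⟩ := p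
    split_ifs with hax
    · subst hax
      rw [truncDist_self, truncDist_eq_of_girth hgirth hp]
      simp only [CharP.cast_eq_zero, sub_zero]
      linarith
    · have := truncDist_le_succ (r := fun a b => (a, b) ∈ A) (c := l₀) hp x
      have : (distA a x : ℝ) ≤ distA b x + 1 := by exact_mod_cast this
      simp only [sub_zero]
      linarith
  · simp [hA p hp]

variable [Fintype α]

theorem rowSum_le_inv
    (hgirth : ∀ (n : ℕ) (γ : Fin (n + 1) → α), Function.Injective γ →
      (∀ m, (γ m, γ (m + 1)) ∈ A) → l₀ ≤ n)
    (hν : memM1s ν) (hA : ∀ p ∉ A, ν p = 0) (x : α) :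
    rowSum ν x ≤ ((l₀ : ℝ) + 1)⁻¹ := by
  have h := sum_mul_slack_eq hν (fun v => (distA v x : ℝ)) ((l₀ : ℝ) + 1) x
  have := sum_nonneg fun p (_ : p ∈ univ) => mul_slack_nonneg hgirth hν.1 hA x p
  rw [← one_div, le_div_iff₀ (by positivity)]
  linarith

theorem truncDist_eq_succ_of_rowSum_eq
    (hgirth : ∀ (n : ℕ) (γ : Fin (n + 1) → α), Function.Injective γ →
      (∀ m, (γ m, γ (m + 1)) ∈ A) → l₀ ≤ n)
    (hν : memM1s ν) (hA : ∀ p ∉ A, ν p = 0) {x : α} (hx : rowSum ν x = ((l₀ : ℝ) + 1)⁻¹)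
    {u y : α} (huy : 0 < ν (u, y)) (hux : u ≠ x) :
    distA u x = distA y x + 1 := by
  have h := sum_mul_slack_eq hν (fun v => (distA v x : ℝ)) ((l₀ : ℝ) + 1) x
  rw [hx, mul_inv_cancel₀ (by positivity), sub_self,
    sum_eq_zero_iff_of_nonneg fun p _ => mul_slack_nonneg hgirth hν.1 hA x p] at h
  have := (mul_eq_zero.mp (h (u, y) (mem_univ _))).resolve_left huy.ne'
  simp only [hux, if_false, sub_zero] at this
  exact_mod_cast (by linarith : (distA u x : ℝ) = distA y x + 1)

end Girth

section EntropyBounds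

variable {β : Type*} [Fintype β] {x : β → ℝ} {c : ℝ}

theorem mul_log_le_mul_log {a c : ℝ} (ha : 0 ≤ a) (hac : a ≤ c) :
    a * Real.log a ≤ a * Real.log c := by
  rcases ha.eq_or_lt with rfl | ha
  · simp
  · exact mul_le_mul_of_nonneg_left (Real.log_le_log ha hac) ha.le

theorem sum_mul_log_le_log (hx0 : ∀ b, 0 ≤ x b) (hxc : ∀ b, x b ≤ c) (hx : ∑ b, x b = 1) :
    ∑ b, x b * Real.log (x b) ≤ Real.log c :=
  calc ∑ b, x b * Real.log (x b) ≤ ∑ b, x b * Real.log c :=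
        sum_le_sum fun b _ => mul_log_le_mul_log (hx0 b) (hxc b)
    _ = Real.log c := by rw [← sum_mul, hx, one_mul]

theorem sum_mul_log_eq_log_iff (hx0 : ∀ b, 0 ≤ x b) (hxc : ∀ b, x b ≤ c)
    (hx : ∑ b, x b = 1) :
    ∑ b, x b * Real.log (x b) = Real.log c ↔ ∀ b, x b = 0 ∨ x b = c := by
  have hgap : ∑ b, x b * Real.log (x b) - Real.log c =
      -∑ b, (x b * Real.log c - x b * Real.log (x b)) := by
    rw [sum_sub_distrib, ← sum_mul, hx, one_mul]
    ring
  rw [← sub_eq_zero, hgap, neg_eq_zero, sum_eq_zero_iff_of_nonneg fun b _ =>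
    sub_nonneg.mpr (mul_log_le_mul_log (hx0 b) (hxc b))]
  refine forall_congr' fun b => ?_
  simp only [mem_univ, true_implies, ← mul_sub, mul_eq_zero, sub_eq_zero]
  refine ⟨fun h => ?_, fun h => h.imp_right fun h => by rw [h]⟩
  rcases (hx0 b).eq_or_lt with h0 | h0
  · exact Or.inl h0.symm
  · exact Or.inr (Real.log_injOn_pos h0 (h0.trans_le (hxc b)) (h.resolve_left h0.ne').symm)

end EntropyBounds

section Functional

variable [Fintype α] {ν : α × α → ℝ} {A : Finset (α × α)}

/-- With `entropyS`, the paper's `𝓘(ν)` and `𝓢(ν)`. -/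
noncomputable def rateI (A : Finset (α × α)) (ν : α × α → ℝ) : ℝ :=
  ∑ p ∈ A, ν p * Real.log (ν p / rowSum ν p.1)

noncomputable def entropyS (ρ : ℝ) (A : Finset (α × α)) (ν : α × α → ℝ) : ℝ :=
  ρ * ∑ p ∈ A, ν p * Real.log (ν p) + ρ * Real.log ρ

theorem sum_mul_log_rowSum (hA : ∀ p ∉ A, ν p = 0) :
    ∑ p ∈ A, ν p * Real.log (rowSum ν p.1) = ∑ i, rowSum ν i * Real.log (rowSum ν i) := by
  rw [sum_subset (subset_univ A) fun p _ hp => by rw [hA p hp, zero_mul],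
    Fintype.sum_prod_type]
  exact sum_congr rfl fun i _ => (sum_mul univ (fun j => ν (i, j)) (Real.log (rowSum ν i))).symm

theorem rateI_sub_entropyS (ρ : ℝ) (hν0 : ∀ p, 0 ≤ ν p) (hA : ∀ p ∉ A, ν p = 0) :
    rateI A ν - entropyS ρ A ν =
      (1 - ρ) * ∑ p ∈ A, ν p * Real.log (ν p) -
        ∑ i, rowSum ν i * Real.log (rowSum ν i) - ρ * Real.log ρ := by
  have hI : rateI A ν =
      ∑ p ∈ A, ν p * Real.log (ν p) - ∑ p ∈ A, ν p * Real.log (rowSum ν p.1) := by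
    rw [rateI, ← sum_sub_distrib]
    refine sum_congr rfl fun p _ => ?_
    rcases (hν0 p).eq_or_lt with h0 | h0
    · simp [← h0]
    · rw [Real.log_div h0.ne' (h0.trans_le (le_rowSum hν0 p)).ne', mul_sub]
  rw [hI, sum_mul_log_rowSum hA, entropyS]
  ring

theorem sum_mul_log_le_sum_rowSum_mul_log (hν0 : ∀ p, 0 ≤ ν p) (hA : ∀ p ∉ A, ν p = 0) :
    ∑ p ∈ A, ν p * Real.log (ν p) ≤ ∑ i, rowSum ν i * Real.log (rowSum ν i) := by
  rw [← sum_mul_log_rowSum hA]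
  exact sum_le_sum fun p _ => mul_log_le_mul_log (hν0 p) (le_rowSum hν0 p)

variable [DecidableEq α] {ρ : ℝ} {l₀ : ℕ}

theorem le_rateI_sub_entropyS (hρ : 1 ≤ ρ)
    (hgirth : ∀ (n : ℕ) (γ : Fin (n + 1) → α), Function.Injective γ →
      (∀ m, (γ m, γ (m + 1)) ∈ A) → l₀ ≤ n)
    (hν : memM1s ν) (hA : ∀ p ∉ A, ν p = 0) :
    ρ * Real.log ((l₀ : ℝ) + 1) - ρ * Real.log ρ ≤ rateI A ν - entropyS ρ A ν := by
  have hEH := sum_mul_log_le_sum_rowSum_mul_log hν.1 hA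
  have hH := sum_mul_log_le_log (rowSum_nonneg hν.1) (rowSum_le_inv hgirth hν hA) (sum_rowSum hν)
  rw [Real.log_inv] at hH
  rw [rateI_sub_entropyS ρ hν.1 hA]
  nlinarith [mul_le_mul_of_nonneg_left hEH (by linarith : 0 ≤ ρ - 1)]

theorem rowSum_eq_of_rateI_sub_entropyS_eq (hρ : 1 ≤ ρ)
    (hgirth : ∀ (n : ℕ) (γ : Fin (n + 1) → α), Function.Injective γ →
      (∀ m, (γ m, γ (m + 1)) ∈ A) → l₀ ≤ n)
    (hν : memM1s ν) (hA : ∀ p ∉ A, ν p = 0)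
    (h : rateI A ν - entropyS ρ A ν = ρ * Real.log ((l₀ : ℝ) + 1) - ρ * Real.log ρ)
    {i : α} (hi : 0 < rowSum ν i) : rowSum ν i = ((l₀ : ℝ) + 1)⁻¹ := by
  have hEH := sum_mul_log_le_sum_rowSum_mul_log hν.1 hA
  have hle := rowSum_le_inv hgirth hν hA
  have hH := sum_mul_log_le_log (rowSum_nonneg hν.1) hle (sum_rowSum hν)
  rw [rateI_sub_entropyS ρ hν.1 hA] at h
  rw [Real.log_inv] at hH
  have hρH : 0 ≤ ρ * (∑ i, rowSum ν i * Real.log (rowSum ν i) + Real.log ((l₀ : ℝ) + 1)) := by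
    nlinarith [mul_le_mul_of_nonneg_left hEH (by linarith : 0 ≤ ρ - 1)]
  have hHeq : ∑ i, rowSum ν i * Real.log (rowSum ν i) = Real.log ((l₀ : ℝ) + 1)⁻¹ := by
    rw [Real.log_inv]
    linarith [nonneg_of_mul_nonneg_right hρH (by linarith : (0 : ℝ) < ρ)]
  exact ((sum_mul_log_eq_log_iff (rowSum_nonneg hν.1) hle (sum_rowSum hν)).mp hHeq i).resolve_left
    hi.ne'

end Functional

section CycleMeasure

variable [Fintype α] [DecidableEq α] {l : ℕ} {γ : Fin (l + 1) → α}

theorem cycleMeasure_eq_sum (hγ : Function.Injective γ) (p : α × α) :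
    cycleMeasure γ p = ∑ m, if p = (γ m, γ (m + 1)) then ((l : ℝ) + 1)⁻¹ else 0 := by
  rw [cycleMeasure]
  split_ifs with h
  · obtain ⟨m, rfl⟩ := h
    rw [sum_eq_single m (fun m' _ hm' => if_neg fun h => hm' (hγ (congrArg Prod.fst h)).symm)
      (by simp), if_pos rfl]
  · exact (sum_eq_zero fun m _ => if_neg fun hm => h ⟨m, hm⟩).symm

theorem rowSum_cycleMeasure (hγ : Function.Injective γ) (i : α) :
    rowSum (cycleMeasure γ) i = ∑ m, if i = γ m then ((l : ℝ) + 1)⁻¹ else 0 := by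
  simp only [rowSum, cycleMeasure_eq_sum hγ]
  rw [sum_comm]
  simp [ite_and]

theorem sum_fst_cycleMeasure (hγ : Function.Injective γ) (i : α) :
    ∑ j, cycleMeasure γ (j, i) = ∑ m, if i = γ m then ((l : ℝ) + 1)⁻¹ else 0 := by
  simp only [cycleMeasure_eq_sum hγ]
  rw [sum_comm]
  simp only [Prod.mk.injEq, ite_and, sum_ite_eq', mem_univ, if_true]
  exact Fintype.sum_equiv (Equiv.addRight 1) _ _ fun m => rfl

theorem memM1s_cycleMeasure (hγ : Function.Injective γ) : memM1s (cycleMeasure γ) := by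
  refine ⟨fun p => ?_, ?_, fun i => ?_⟩
  · rw [cycleMeasure]
    split_ifs <;> positivity
  · rw [Fintype.sum_prod_type]
    change ∑ i, rowSum (cycleMeasure γ) i = 1
    simp only [rowSum_cycleMeasure hγ]
    rw [sum_comm]
    simp [mul_inv_cancel₀ (by positivity : (l : ℝ) + 1 ≠ 0)]
  · exact (rowSum_cycleMeasure hγ i).trans (sum_fst_cycleMeasure hγ i).symm

theorem rowSum_cycleMeasure_eq_zero_or (hγ : Function.Injective γ) (i : α) :
    rowSum (cycleMeasure γ) i = 0 ∨ rowSum (cycleMeasure γ) i = ((l : ℝ) + 1)⁻¹ := by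
  rw [rowSum_cycleMeasure hγ]
  by_cases h : ∃ m, i = γ m
  · obtain ⟨m, rfl⟩ := h
    exact Or.inr <| by
      rw [sum_eq_single m (fun m' _ hm' => if_neg fun h => hm' (hγ h).symm) (by simp), if_pos rfl]
  · exact Or.inl <| sum_eq_zero fun m _ => if_neg fun hm => h ⟨m, hm⟩

theorem cycleMeasure_eq_zero_of_notMem {A : Finset (α × α)} (hγA : ∀ m, (γ m, γ (m + 1)) ∈ A)
    {p : α × α} (hp : p ∉ A) : cycleMeasure γ p = 0 := by
  rw [cycleMeasure, if_neg]
  rintro ⟨m, rfl⟩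
  exact hp (hγA m)

theorem rateI_sub_entropyS_cycleMeasure {A : Finset (α × α)} (ρ : ℝ) (hγ : Function.Injective γ)
    (hγA : ∀ m, (γ m, γ (m + 1)) ∈ A) :
    rateI A (cycleMeasure γ) - entropyS ρ A (cycleMeasure γ) =
      ρ * Real.log ((l : ℝ) + 1) - ρ * Real.log ρ := by
  have hμ := memM1s_cycleMeasure hγ
  have hA : ∀ p ∉ A, cycleMeasure γ p = 0 := fun p => cycleMeasure_eq_zero_of_notMem hγA
  have hμ_le : ∀ p, cycleMeasure γ p ≤ ((l : ℝ) + 1)⁻¹ := fun p => by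
    rw [cycleMeasure]
    split_ifs
    exacts [le_rfl, by positivity]
  have hrow_le : ∀ i, rowSum (cycleMeasure γ) i ≤ ((l : ℝ) + 1)⁻¹ := fun i => by
    rcases rowSum_cycleMeasure_eq_zero_or hγ i with h | h
    · rw [h]; positivity
    · exact h.le
  have hE : ∑ p ∈ A, cycleMeasure γ p * Real.log (cycleMeasure γ p) =
      Real.log ((l : ℝ) + 1)⁻¹ := by
    rw [sum_subset (subset_univ A) fun p _ hp => by rw [hA p hp, zero_mul],
      sum_mul_log_eq_log_iff hμ.1 hμ_le hμ.2.1]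
    intro p
    rw [cycleMeasure]
    split_ifs
    exacts [Or.inr rfl, Or.inl rfl]
  have hH : ∑ i, rowSum (cycleMeasure γ) i * Real.log (rowSum (cycleMeasure γ) i) =
      Real.log ((l : ℝ) + 1)⁻¹ :=
    (sum_mul_log_eq_log_iff (rowSum_nonneg hμ.1) hrow_le (sum_rowSum hμ)).mpr
      (rowSum_cycleMeasure_eq_zero_or hγ)
  rw [rateI_sub_entropyS ρ hμ.1 hA, hE, hH, Real.log_inv]
  ring

end CycleMeasure

section Potential

variable {r : α → α → Prop} {S : Finset α} {l₀ : ℕ} {x : α} {φ : α → ℕ} {f : α → α}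

theorem potential_iterate_succ (hf : ∀ u ∈ S, r u (f u)) (hfS : Set.MapsTo f S S)
    (hx : x ∈ S) (hφx : φ x = 0) (hφ_out : ∀ y, r x y → φ y = l₀)
    (hφ_step : ∀ u y, r u y → u ≠ x → φ u = φ y + 1) :
    ∀ m ≤ l₀, φ (f^[m + 1] x) = l₀ - m := by
  intro m hm
  induction m with
  | zero => exact hφ_out _ (hf x hx)
  | succ m ih =>
    have hlev := ih (by omega)
    have hne : f^[m + 1] x ≠ x := fun h => by rw [h, hφx] at hlev; omega
    have hstep : φ (f^[m + 1] x) = φ (f^[m + 1 + 1] x) + 1 := by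
      rw [Function.iterate_succ_apply' f (m + 1)]
      exact hφ_step _ _ (hf _ (hfS.iterate _ hx)) hne
    omega

theorem iterate_succ_eq_self_of_potential (hf : ∀ u ∈ S, r u (f u)) (hfS : Set.MapsTo f S S)
    (hx : x ∈ S) (hφx : φ x = 0) (hφ_out : ∀ y, r x y → φ y = l₀)
    (hφ_step : ∀ u y, r u y → u ≠ x → φ u = φ y + 1) :
    f^[l₀ + 1] x = x := by
  by_contra hne
  have := hφ_step _ _ (hf _ (hfS.iterate _ hx)) hne
  rw [potential_iterate_succ hf hfS hx hφx hφ_out hφ_step l₀ le_rfl] at this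
  omega

theorem potential_eq_of_rel (hφ_out : ∀ y, r x y → φ y = l₀)
    (hφ_step : ∀ u y, r u y → u ≠ x → φ u = φ y + 1) {u y y' : α} (hy : r u y) (hy' : r u y') :
    φ y = φ y' := by
  by_cases hux : u = x
  · subst hux
    rw [hφ_out _ hy, hφ_out _ hy']
  · have := hφ_step _ _ hy hux
    have := hφ_step _ _ hy' hux
    omega

theorem exists_cycle_of_potential [DecidableEq α] (hS : S.card = l₀ + 1)
    (hsucc : ∀ u ∈ S, ∃ y, r u y) (hmem : ∀ u y, r u y → u ∈ S ∧ y ∈ S) (hx : x ∈ S)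
    (hφx : φ x = 0) (hφ_out : ∀ y, r x y → φ y = l₀)
    (hφ_step : ∀ u y, r u y → u ≠ x → φ u = φ y + 1) :
    ∃ γ : Fin (l₀ + 1) → α, Function.Injective γ ∧ (∀ m, r (γ m) (γ (m + 1))) ∧
      ∀ u y, r u y → ∃ m, u = γ m ∧ y = γ (m + 1) := by
  choose! f hf using hsucc
  have hfS : Set.MapsTo f S S := fun u hu => (hmem _ _ (hf u hu)).2
  set γ : Fin (l₀ + 1) → α := fun m => f^[m + 1] x
  have hγS : ∀ m, γ m ∈ S := fun m => hfS.iterate _ hx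
  have hγφ : ∀ m, φ (γ m) = l₀ - m := fun m =>
    potential_iterate_succ hf hfS hx hφx hφ_out hφ_step m (Nat.lt_succ_iff.mp m.isLt)
  have hγ : Function.Injective γ := fun a b h => by
    have := congrArg φ h
    rw [hγφ, hγφ] at this
    exact Fin.ext (by omega)
  have hγ_succ : ∀ m, γ (m + 1) = f (γ m) := fun m => by
    simp only [γ, ← Function.iterate_succ_apply' f, Fin.val_add_one]
    split_ifs with h
    · rw [h, Fin.val_last, Function.iterate_succ_apply' f (l₀ + 1),
        iterate_succ_eq_self_of_potential hf hfS hx hφx hφ_out hφ_step]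
      rfl
    · rfl
  have himg : univ.image γ = S := eq_of_subset_of_card_le
    (fun u hu => by obtain ⟨m, -, rfl⟩ := mem_image.mp hu; exact hγS m)
    (by rw [card_image_of_injective _ hγ, card_univ, Fintype.card_fin, hS])
  -- every vertex of `S` is some `γ m`, and these have distinct potentials
  have hφ_inj : ∀ u ∈ S, ∀ v ∈ S, φ u = φ v → u = v := by
    intro u hu v hv huv
    obtain ⟨a, -, rfl⟩ := mem_image.mp (himg ▸ hu)
    obtain ⟨b, -, rfl⟩ := mem_image.mp (himg ▸ hv)
    rw [hγφ, hγφ] at huv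
    rw [Fin.ext (by omega : (a : ℕ) = b)]
  refine ⟨γ, hγ, fun m => hγ_succ m ▸ hf _ (hγS m), fun u y huy => ?_⟩
  obtain ⟨m, -, rfl⟩ := mem_image.mp (himg ▸ (hmem _ _ huy).1)
  refine ⟨m, rfl, ?_⟩
  rw [hγ_succ]
  exact hφ_inj _ (hmem _ _ huy).2 _ (hfS (hγS m))
    (potential_eq_of_rel hφ_out hφ_step huy (hf _ (hγS m)))

end Potential

section EqualityCase

variable [Fintype α] [DecidableEq α] {ν : α × α → ℝ}

theorem eq_cycleMeasure_of_support_subset_edges {l : ℕ} {γ : Fin (l + 1) → α}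
    (hν0 : ∀ p, 0 ≤ ν p) (hγ : Function.Injective γ) (hrow : ∀ m, rowSum ν (γ m) = ((l : ℝ) + 1)⁻¹)
    (hcover : ∀ u y, 0 < ν (u, y) → ∃ m, u = γ m ∧ y = γ (m + 1)) :
    ν = cycleMeasure γ := by
  have hzero : ∀ u y, (¬∃ m, u = γ m ∧ y = γ (m + 1)) → ν (u, y) = 0 := fun u y h =>
    le_antisymm (not_lt.mp fun hpos => h (hcover u y hpos)) (hν0 _)
  funext ⟨u, y⟩
  rw [cycleMeasure]
  split_ifs with h
  · obtain ⟨m, hm⟩ := h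
    obtain ⟨rfl, rfl⟩ := Prod.mk.inj hm
    rw [← hrow m, rowSum, sum_eq_single (γ (m + 1)) (fun j _ hj => hzero _ _ ?_) (by simp)]
    rintro ⟨m', h1, rfl⟩
    exact hj (by rw [hγ h1])
  · exact hzero u y fun ⟨m, h1, h2⟩ => h ⟨m, by rw [h1, h2]⟩

theorem exists_eq_cycleMeasure_of_rowSum_eq {A : Finset (α × α)} {l₀ : ℕ}
    (hgirth : ∀ (n : ℕ) (γ : Fin (n + 1) → α), Function.Injective γ →
      (∀ m, (γ m, γ (m + 1)) ∈ A) → l₀ ≤ n)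
    (hν : memM1s ν) (hA : ∀ p ∉ A, ν p = 0)
    (hrow : ∀ i, 0 < rowSum ν i → rowSum ν i = ((l₀ : ℝ) + 1)⁻¹) :
    ∃ γ : Fin (l₀ + 1) → α, Function.Injective γ ∧ (∀ m, (γ m, γ (m + 1)) ∈ A) ∧
      ν = cycleMeasure γ := by
  have hmemA : ∀ {p}, 0 < ν p → p ∈ A := fun {p} hp => by
    by_contra h
    exact hp.ne' (hA p h)
  set S := univ.filter fun i => 0 < rowSum ν i
  have hmemS : ∀ u y, 0 < ν (u, y) → u ∈ S ∧ y ∈ S := fun u y huy => by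
    refine ⟨mem_filter.mpr ⟨mem_univ _, huy.trans_le (le_rowSum hν.1 (u, y))⟩,
      mem_filter.mpr ⟨mem_univ _, ?_⟩⟩
    rw [rowSum, hν.2.2 y]
    exact huy.trans_le (single_le_sum (f := fun j => ν (j, y)) (fun j _ => hν.1 (j, y))
      (mem_univ u))
  have hS : S.card = l₀ + 1 := by
    have h1 : ∑ i ∈ S, rowSum ν i = 1 := by
      rw [sum_filter_of_ne fun i _ hi => (rowSum_nonneg hν.1 i).lt_of_ne' hi, sum_rowSum hν]
    rw [sum_congr rfl fun i hi => hrow i (mem_filter.mp hi).2, sum_const, nsmul_eq_mul,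
      mul_inv_eq_one₀ (by positivity)] at h1
    exact_mod_cast h1
  have hsucc : ∀ u ∈ S, ∃ y, 0 < ν (u, y) := fun u hu =>
    (exists_lt_of_sum_lt (by simpa [rowSum] using (mem_filter.mp hu).2)).imp fun _ h => h.2
  obtain ⟨x, hx⟩ : S.Nonempty := card_pos.mp (by omega)
  have hxrow : rowSum ν x = ((l₀ : ℝ) + 1)⁻¹ := hrow x (mem_filter.mp hx).2
  obtain ⟨γ, hγ, hγν, hcover⟩ := exists_cycle_of_potential
    (φ := fun v => truncDist (fun a b => (a, b) ∈ A) l₀ v x) hS hsucc hmemS hx (truncDist_self x)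
    (fun y hy => truncDist_eq_of_girth hgirth (hmemA hy))
    (fun u y huy hux => truncDist_eq_succ_of_rowSum_eq hgirth hν hA hxrow huy hux)
  exact ⟨γ, hγ, fun m => hmemA (hγν m), eq_cycleMeasure_of_support_subset_edges hν.1 hγ
    (fun m => hrow _ (mem_filter.mp (hmemS _ _ (hγν m)).1).2) hcover⟩

end EqualityCase

end

open Finset in
theorem stmt16_general {T : Type*} [Fintype T] [DecidableEq T]
    (A : Finset (T × T))
    (ρ : ℝ) (hρ : 1 ≤ ρ) (l₀ : ℕ)
    (hgirth₁ : ∃ γ : Fin (l₀ + 1) → T, Function.Injective γ ∧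
      ∀ m, (γ m, γ (m + 1)) ∈ A)
    (hgirth₂ : ∀ (l : ℕ) (γ : Fin (l + 1) → T), Function.Injective γ →
      (∀ m, (γ m, γ (m + 1)) ∈ A) → l₀ ≤ l) :
    IsLeast
      ((fun ν : T × T → ℝ =>
          (∑ p ∈ A, ν p * Real.log (ν p / ∑ k : T, ν (p.1, k))) -
            (ρ * ∑ p ∈ A, ν p * Real.log (ν p) + ρ * Real.log ρ)) ''
        {ν : T × T → ℝ | memM1s ν ∧ ∀ p ∉ A, ν p = 0})
      (ρ * Real.log ((l₀ : ℝ) + 1) - ρ * Real.log ρ) ∧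
    ∀ ν : T × T → ℝ, memM1s ν → (∀ p ∉ A, ν p = 0) →
      ((∑ p ∈ A, ν p * Real.log (ν p / ∑ k : T, ν (p.1, k))) -
          (ρ * ∑ p ∈ A, ν p * Real.log (ν p) + ρ * Real.log ρ) =
        ρ * Real.log ((l₀ : ℝ) + 1) - ρ * Real.log ρ ↔
      ∃ γ : Fin (l₀ + 1) → T, Function.Injective γ ∧
        (∀ m, (γ m, γ (m + 1)) ∈ A) ∧ ν = cycleMeasure γ) := by
  obtain ⟨γ₀, hγ₀, hγ₀A⟩ := hgirth₁
  refine ⟨⟨?_, ?_⟩, fun ν hν hA => ⟨fun h => ?_, ?_⟩⟩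
  · exact ⟨cycleMeasure γ₀,
      ⟨memM1s_cycleMeasure hγ₀, fun _ => cycleMeasure_eq_zero_of_notMem hγ₀A⟩,
      rateI_sub_entropyS_cycleMeasure ρ hγ₀ hγ₀A⟩
  · rintro _ ⟨ν, ⟨hν, hA⟩, rfl⟩
    exact le_rateI_sub_entropyS hρ hgirth₂ hν hA
  · exact exists_eq_cycleMeasure_of_rowSum_eq hgirth₂ hν hA fun i =>
      rowSum_eq_of_rateI_sub_entropyS_eq hρ hgirth₂ hν hA h
  · rintro ⟨γ, hγ, hγA, rfl⟩
    exact rateI_sub_entropyS_cycleMeasure ρ hγ hγA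

open Finset in
/-- Constant-`ρ` case of the second-order variational formula.  For `ρ ≥ 1` and a finite
directed graph `(T, A)` with all outdegrees positive and girth `l₀ + 1`, the minimum
over probability measures `ν` with equal marginals supported on `A` of
`I(ν) - S(ν)`, where `S(ν) = ρ ∑_{(i,j)∈A} ν(i,j) log ν(i,j) + ρ log ρ` and
`I(ν) = ∑_{(i,j)∈A} ν(i,j) log(ν(i,j)/ν̄(i))`, equals `ρ log(l₀+1) - ρ log ρ`, and the
minimizers are exactly the cycle measures `μ_γ` of simple cycles of minimal length. -/
theorem stmt16 {T : Type*} [Fintype T] [DecidableEq T] [Nonempty T]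
    (A : Finset (T × T)) (hout : ∀ i : T, ∃ j, (i, j) ∈ A)
    (ρ : ℝ) (hρ : 1 ≤ ρ) (l₀ : ℕ)
    (hgirth₁ : ∃ γ : Fin (l₀ + 1) → T, Function.Injective γ ∧
      ∀ m, (γ m, γ (m + 1)) ∈ A)
    (hgirth₂ : ∀ (l : ℕ) (γ : Fin (l + 1) → T), Function.Injective γ →
      (∀ m, (γ m, γ (m + 1)) ∈ A) → l₀ ≤ l) :
    IsLeast
      ((fun ν : T × T → ℝ =>
          (∑ p ∈ A, ν p * Real.log (ν p / ∑ k : T, ν (p.1, k))) -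
            (ρ * ∑ p ∈ A, ν p * Real.log (ν p) + ρ * Real.log ρ)) ''
        {ν : T × T → ℝ | memM1s ν ∧ ∀ p ∉ A, ν p = 0})
      (ρ * Real.log ((l₀ : ℝ) + 1) - ρ * Real.log ρ) ∧
    ∀ ν : T × T → ℝ, memM1s ν → (∀ p ∉ A, ν p = 0) →
      ((∑ p ∈ A, ν p * Real.log (ν p / ∑ k : T, ν (p.1, k))) -
          (ρ * ∑ p ∈ A, ν p * Real.log (ν p) + ρ * Real.log ρ) =
        ρ * Real.log ((l₀ : ℝ) + 1) - ρ * Real.log ρ ↔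
      ∃ γ : Fin (l₀ + 1) → T, Function.Injective γ ∧
        (∀ m, (γ m, γ (m + 1)) ∈ A) ∧ ν = cycleMeasure γ) :=
  stmt16_general A ρ hρ l₀ hgirth₁ hgirth₂
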